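/- arXiv:2404.17924 — 3 statements merged into one kernel-verified Lean document; each statement's English description precedes it below -/
import Mathlib

section
/- For gambles g₁,…,gₙ and f ∈ 𝒢: f ∈ desext({g₁,…,gₙ}) := posi({g₁,…,gₙ} ∪ G₊) if and only if either f ∈ G₊ or there is some h ∈ posi({g₁,…,gₙ}) with f ≥ h pointwise. -/
open scoped BigOperators

universe u v

def GambleSpace (Ω : Type v) : Submodule ℝ (Ω → ℝ) where
  carrier := {f | ∃ M, ∀ ω, |f ω| ≤ M}
  add_mem' := by
    rintro f g ⟨M, hM⟩ ⟨N, hN⟩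
    exact ⟨M + N, fun ω => (abs_add_le _ _).trans (add_le_add (hM ω) (hN ω))⟩
  zero_mem' := ⟨0, fun ω => by simp⟩
  smul_mem' := by
    rintro c f ⟨M, hM⟩
    exact ⟨|c| * M, fun ω => by
      simpa [abs_mul] using mul_le_mul_of_nonneg_left (hM ω) (abs_nonneg c)⟩

/-- The type of gambles: bounded functions `Ω → ℝ`. -/
abbrev Gamble (Ω : Type v) := GambleSpace Ω

/-- Pointwise order on gambles: `gle f g` means `f ≤ g` pointwise. -/
def gle {Ω : Type v} (f g : Gamble Ω) : Prop := ∀ ω, (f : Ω → ℝ) ω ≤ (g : Ω → ℝ) ω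

/-- Gambles weakly dominating `0`. -/
def Gpos (Ω : Type v) : Set (Gamble Ω) := {g | gle 0 g ∧ g ≠ 0}

/-- Positive linear hull: finite positive combinations of members of `B`. -/
def posi {Ω : Type v} (B : Set (Gamble Ω)) : Set (Gamble Ω) :=
  {f | ∃ n : ℕ, 0 < n ∧ ∃ (l : Fin n → ℝ) (g : Fin n → Gamble Ω),
    (∀ i, 0 < l i) ∧ (∀ i, g i ∈ B) ∧ f = ∑ i, l i • g i}

/-- Natural extension of a set of gambles. -/
def desext {Ω : Type v} (E : Set (Gamble Ω)) : Set (Gamble Ω) := posi (E ∪ Gpos Ω)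

/-- Coherence for a set of desirable gambles. -/
def CoherentD {Ω : Type v} (D : Set (Gamble Ω)) : Prop :=
  (0 : Gamble Ω) ∉ D ∧ Gpos Ω ⊆ D ∧
  (∀ g ∈ D, ∀ l : ℝ, 0 < l → l • g ∈ D) ∧
  (∀ f ∈ D, ∀ g ∈ D, f + g ∈ D)

/-- Coherence for a set of desirable gamble sets. -/
def CoherentK {Ω : Type v} (K : Set (Set (Gamble Ω))) : Prop :=
  (∅ : Set (Gamble Ω)) ∉ K ∧
  (∀ A ∈ K, A \ {0} ∈ K) ∧
  (∀ g ∈ Gpos Ω, ({g} : Set (Gamble Ω)) ∈ K) ∧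
  (∀ A ∈ K, ∀ B : Set (Gamble Ω), A ⊆ B → B ∈ K) ∧
  (∀ A ∈ K, ∀ F : Gamble Ω → Gamble Ω, (∀ g ∈ A, gle g (F g)) → F '' A ∈ K) ∧
  (∀ n : ℕ, 0 < n → ∀ A : Fin n → Set (Gamble Ω), (∀ i, A i ∈ K) →
    ∀ F : (Fin n → Gamble Ω) → Gamble Ω,
    (∀ g : Fin n → Gamble Ω, (∀ i, g i ∈ A i) → F g ∈ posi (Set.range g)) →
    {b | ∃ g : Fin n → Gamble Ω, (∀ i, g i ∈ A i) ∧ b = F g} ∈ K)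

/-- The infinite addition axiom. -/
def KAddInf {Ω : Type v} (K : Set (Set (Gamble Ω))) : Prop :=
  ∀ (I : Type v) (A : I → Set (Gamble Ω)), (∀ i, A i ∈ K) →
    ∀ F : (I → Gamble Ω) → Gamble Ω,
    (∀ g : I → Gamble Ω, (∀ i, g i ∈ A i) → F g ∈ posi (Set.range g)) →
    {b | ∃ g : I → Gamble Ω, (∀ i, g i ∈ A i) ∧ b = F g} ∈ K

/-- Natural extension of a set of gamble sets (nonempty case). -/
def ExtK {Ω : Type v} (𝒜 : Set (Set (Gamble Ω))) : Set (Set (Gamble Ω)) :=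
  {B | ∃ n : ℕ, 0 < n ∧ ∃ A : Fin n → Set (Gamble Ω), (∀ i, A i ∈ 𝒜) ∧
    ∀ g : Fin n → Gamble Ω, (∀ i, g i ∈ A i) →
      (0 : Gamble Ω) ∉ desext (Set.range g) → ∃ f ∈ B, f ∈ desext (Set.range g)}

/-!
A positive combination of the `gᵢ` and of gambles in `G₊` splits into its `gᵢ`-part `h` and its
`G₊`-part; the latter is again in `G₊`, since `G₊` is the set of strictly positive gambles and so is
closed under positive combinations. Hence `f` is in `G₊`, or in `posi {gᵢ}`, or `f = h + b` with
`b ∈ G₊`; together these say precisely that `f ∈ G₊` or `h ≤ f` for some `h ∈ posi {gᵢ}`.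
-/

section

variable {Ω : Type v}

lemma gle_iff_le {f g : Gamble Ω} : gle f g ↔ f ≤ g := Iff.rfl

instance : PosSMulStrictMono ℝ (Gamble Ω) :=
  PosSMulStrictMono.lift Subtype.val Iff.rfl fun _ _ => rfl

lemma mem_Gpos {g : Gamble Ω} : g ∈ Gpos Ω ↔ 0 < g := by
  rw [lt_iff_le_and_ne, ne_comm]
  rfl

lemma le_iff_eq_or_exists_add_mem_Gpos {h f : Gamble Ω} :
    h ≤ f ↔ h = f ∨ ∃ b ∈ Gpos Ω, h + b = f := by
  refine ⟨fun hle => (eq_or_lt_of_le hle).imp_right fun hlt => ?_, ?_⟩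
  · exact ⟨f - h, mem_Gpos.2 (sub_pos.2 hlt), add_sub_cancel h f⟩
  · rintro (rfl | ⟨b, hb, rfl⟩)
    · exact le_rfl
    · exact le_add_of_nonneg_right (mem_Gpos.1 hb).le

variable {A B : Set (Gamble Ω)}

lemma smul_mem_posi {a : Gamble Ω} (ha : a ∈ A) {c : ℝ} (hc : 0 < c) : c • a ∈ posi A :=
  ⟨1, one_pos, fun _ => c, fun _ => a, fun _ => hc, fun _ => ha, by simp⟩

lemma subset_posi : A ⊆ posi A := fun a ha => by
  simpa using smul_mem_posi ha one_pos

lemma posi_mono (h : A ⊆ B) : posi A ⊆ posi B := by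
  rintro f ⟨n, hn, l, g, hl, hg, rfl⟩
  exact ⟨n, hn, l, g, hl, fun i => h (hg i), rfl⟩

lemma add_mem_posi {x y : Gamble Ω} (hx : x ∈ posi A) (hy : y ∈ posi A) : x + y ∈ posi A := by
  obtain ⟨n, hn, l, g, hl, hg, rfl⟩ := hx
  obtain ⟨m, -, l', g', hl', hg', rfl⟩ := hy
  refine ⟨n + m, by omega, Fin.append l l', Fin.append g g', ?_, ?_, ?_⟩
  · simp [Fin.forall_fin_add, hl, hl']
  · simp [Fin.forall_fin_add, hg, hg']
  · simp [Fin.sum_univ_add]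

lemma sum_mem_posi {ι : Type*} {s : Finset ι} (hs : s.Nonempty) {l : ι → ℝ} {g : ι → Gamble Ω}
    (hl : ∀ i ∈ s, 0 < l i) (hg : ∀ i ∈ s, g i ∈ A) : ∑ i ∈ s, l i • g i ∈ posi A := by
  induction hs using Finset.Nonempty.cons_induction with
  | singleton i => simpa using smul_mem_posi (hg i (by simp)) (hl i (by simp))
  | cons i s hi hs ih =>
    rw [Finset.sum_cons]
    exact add_mem_posi (smul_mem_posi (hg i (by simp)) (hl i (by simp)))
      (ih (fun j hj => hl j (by simp [hj])) (fun j hj => hg j (by simp [hj])))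

lemma mem_posi_union {x : Gamble Ω} :
    x ∈ posi (A ∪ B) ↔ x ∈ posi A ∨ x ∈ posi B ∨ ∃ a ∈ posi A, ∃ b ∈ posi B, a + b = x := by
  classical
  constructor
  · rintro ⟨n, hn, l, g, hl, hg, rfl⟩
    rcases (Finset.univ.filter fun i => g i ∈ A).eq_empty_or_nonempty with hA | hA
    · rw [Finset.filter_eq_empty_iff] at hA
      exact Or.inr <| Or.inl
        ⟨n, hn, l, g, hl, fun i => (hg i).resolve_left (hA (Finset.mem_univ i)), rfl⟩
    rcases (Finset.univ.filter fun i => g i ∉ A).eq_empty_or_nonempty with hB | hB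
    · rw [Finset.filter_eq_empty_iff] at hB
      exact Or.inl ⟨n, hn, l, g, hl, fun i => not_not.1 (hB (Finset.mem_univ i)), rfl⟩
    refine Or.inr <| Or.inr ⟨_, sum_mem_posi hA (fun i _ => hl i) fun i hi => ?_,
      _, sum_mem_posi hB (fun i _ => hl i) fun i hi => ?_, Finset.sum_filter_add_sum_filter_not ..⟩
    · exact (Finset.mem_filter.1 hi).2
    · exact (hg i).resolve_left (Finset.mem_filter.1 hi).2
  · rintro (hx | hx | ⟨a, ha, b, hb, rfl⟩)
    · exact posi_mono Set.subset_union_left hx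
    · exact posi_mono Set.subset_union_right hx
    · exact add_mem_posi (posi_mono Set.subset_union_left ha) (posi_mono Set.subset_union_right hb)

lemma posi_Gpos : posi (Gpos Ω) = Gpos Ω := by
  refine subset_antisymm ?_ subset_posi
  rintro x ⟨n, hn, l, g, hl, hg, rfl⟩
  exact mem_Gpos.2 <| Finset.sum_pos (fun i _ => smul_pos (hl i) (mem_Gpos.1 (hg i)))
    (Finset.univ_nonempty_iff.2 ⟨⟨0, hn⟩⟩)

end

theorem stmt5_general {Ω : Type v} {n : ℕ} (g : Fin n → Gamble Ω) (f : Gamble Ω) :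
    f ∈ desext (Set.range g) ↔
      (f ∈ Gpos Ω ∨ ∃ h ∈ posi (Set.range g), gle h f) := by
  simp_rw [desext, mem_posi_union, posi_Gpos, gle_iff_le, le_iff_eq_or_exists_add_mem_Gpos]
  constructor
  · rintro (hf | hf | ⟨h, hh, b, hb, rfl⟩)
    · exact Or.inr ⟨f, hf, Or.inl rfl⟩
    · exact Or.inl hf
    · exact Or.inr ⟨h, hh, Or.inr ⟨b, hb, rfl⟩⟩
  · rintro (hf | ⟨h, hh, rfl | ⟨b, hb, rfl⟩⟩)
    · exact Or.inr (Or.inl hf)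
    · exact Or.inl hh
    · exact Or.inr (Or.inr ⟨h, hh, b, hb, rfl⟩)

theorem stmt5 {Ω : Type v} [Nonempty Ω] {n : ℕ} (g : Fin n → Gamble Ω) (f : Gamble Ω) :
    f ∈ desext (Set.range g) ↔
      (f ∈ Gpos Ω ∨ ∃ h ∈ posi (Set.range g), gle h f) :=
  stmt5_general g f
end

section
/- Let 𝒜 ⊆ 𝒫(𝒢) be nonempty and define Ext(𝒜) by: B ∈ Ext(𝒜) iff there are A₁,…,Aₙ ∈ 𝒜 such that for each (g₁,…,gₙ) ∈ A₁×…×Aₙ, whenever 0 ∉ desext({g₁,…,gₙ}) there exists f ∈ B with f ∈ desext({g₁,…,gₙ}). If ∅ ∉ Ext(𝒜), then Ext(𝒜) is coherent. -/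
open scoped BigOperators

universe u v

/-!
Each axiom is checked pointwise: for a choice `g` of one gamble from each of the finitely many
generating sets, the witness for the new set must lie in `desext (range g)`, a convex cone that
contains `Gpos Ω` and is therefore closed under increasing a gamble. For the addition axiom, one
concatenates the generating families of `A₁, …, Aₙ`; a choice `g` from the concatenation restricts
to a choice for each `Aᵢ`, producing witnesses `fᵢ ∈ Aᵢ ∩ desext (range g)`, and then
`F f ∈ posi (range f) ⊆ desext (range g)`.
-/

variable {Ω : Type v}

section Posi

lemma subset_posi_s7 (B : Set (Gamble Ω)) : B ⊆ posi B := fun g hg =>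
  ⟨1, one_pos, fun _ => 1, fun _ => g, fun _ => one_pos, fun _ => hg, by simp⟩

lemma posi_mono_s7 {B C : Set (Gamble Ω)} (h : B ⊆ C) : posi B ⊆ posi C := by
  rintro f ⟨n, hn, l, g, hl, hg, rfl⟩
  exact ⟨n, hn, l, g, hl, fun i => h (hg i), rfl⟩

lemma add_mem_posi_s7 {B : Set (Gamble Ω)} {f g : Gamble Ω} (hf : f ∈ posi B)
    (hg : g ∈ posi B) : f + g ∈ posi B := by
  obtain ⟨n, hn, l, u, hl, hu, rfl⟩ := hf
  obtain ⟨m, -, k, v, hk, hv, rfl⟩ := hg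
  refine ⟨n + m, by omega, Fin.append l k, Fin.append u v, ?_, ?_, ?_⟩
  · exact Fin.addCases (fun i => by simpa using hl i) (fun i => by simpa using hk i)
  · exact Fin.addCases (fun i => by simpa using hu i) (fun i => by simpa using hv i)
  · simp [Fin.sum_univ_add]

lemma smul_mem_posi_s7 {B : Set (Gamble Ω)} {g : Gamble Ω} (hg : g ∈ posi B) {l : ℝ}
    (hl : 0 < l) : l • g ∈ posi B := by
  obtain ⟨n, hn, k, u, hk, hu, rfl⟩ := hg
  refine ⟨n, hn, fun i => l * k i, u, fun i => mul_pos hl (hk i), hu, ?_⟩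
  simp [Finset.smul_sum, smul_smul]

lemma posi_subset_of_subset {B D : Set (Gamble Ω)} (hBD : B ⊆ D)
    (hadd : ∀ f ∈ D, ∀ g ∈ D, f + g ∈ D) (hsmul : ∀ g ∈ D, ∀ l : ℝ, 0 < l → l • g ∈ D) :
    posi B ⊆ D := by
  rintro f ⟨n, hn, l, g, hl, hg, rfl⟩
  exact Finset.sum_induction_nonempty _ (· ∈ D) (fun a b ha hb => hadd a ha b hb)
    (Finset.univ_nonempty_iff.mpr (Fin.pos_iff_nonempty.mp hn))
    fun i _ => hsmul _ (hBD (hg i)) _ (hl i)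

end Posi

section Desext

lemma desext_mono {B C : Set (Gamble Ω)} (h : B ⊆ C) : desext B ⊆ desext C :=
  posi_mono_s7 (Set.union_subset_union_left _ h)

lemma Gpos_subset_desext (S : Set (Gamble Ω)) : Gpos Ω ⊆ desext S :=
  Set.subset_union_right.trans (subset_posi_s7 _)

lemma posi_subset_desext {B S : Set (Gamble Ω)} (h : B ⊆ desext S) : posi B ⊆ desext S :=
  posi_subset_of_subset h (fun _ hf _ hg => add_mem_posi_s7 hf hg)
    fun _ hg _ hl => smul_mem_posi_s7 hg hl

lemma mem_desext_of_gle {S : Set (Gamble Ω)} {f h : Gamble Ω} (hf : f ∈ desext S)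
    (hfh : gle f h) : h ∈ desext S := by
  rcases eq_or_ne h f with rfl | hne
  · exact hf
  have hpos : h - f ∈ Gpos Ω :=
    ⟨fun ω => by simpa using hfh ω, sub_ne_zero.mpr hne⟩
  have hsum : f + (h - f) ∈ desext S := add_mem_posi_s7 hf (Gpos_subset_desext S hpos)
  simpa using hsum

end Desext

section ExtK

variable {𝒜 : Set (Set (Gamble Ω))}

lemma mem_extK_of_fintype {ι : Type*} [Fintype ι] [Nonempty ι] {B : Set (Gamble Ω)}
    (A : ι → Set (Gamble Ω)) (hA : ∀ i, A i ∈ 𝒜)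
    (hB : ∀ g : ι → Gamble Ω, (∀ i, g i ∈ A i) →
      (0 : Gamble Ω) ∉ desext (Set.range g) → ∃ f ∈ B, f ∈ desext (Set.range g)) :
    B ∈ ExtK 𝒜 := by
  let e := Fintype.equivFin ι
  refine ⟨Fintype.card ι, Fintype.card_pos, A ∘ e.symm, fun j => hA _, fun g hg => ?_⟩
  have hrange : Set.range (g ∘ e) = Set.range g := EquivLike.range_comp g e
  simpa only [hrange] using hB (g ∘ e) fun i => by simpa using hg (e i)

lemma mem_extK_of_mem_extK {A B : Set (Gamble Ω)} (hA : A ∈ ExtK 𝒜)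
    (hAB : ∀ S : Set (Gamble Ω), (0 : Gamble Ω) ∉ desext S → ∀ f ∈ A, f ∈ desext S →
      ∃ f' ∈ B, f' ∈ desext S) :
    B ∈ ExtK 𝒜 := by
  obtain ⟨n, hn, A', hA', hprop⟩ := hA
  refine ⟨n, hn, A', hA', fun g hg h0 => ?_⟩
  obtain ⟨f, hfA, hfS⟩ := hprop g hg h0
  exact hAB _ h0 f hfA hfS

lemma diff_zero_mem_extK {A : Set (Gamble Ω)} (hA : A ∈ ExtK 𝒜) : A \ {0} ∈ ExtK 𝒜 :=
  mem_extK_of_mem_extK hA fun _ h0 f hfA hfS =>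
    ⟨f, ⟨hfA, fun hf0 => h0 (Set.mem_singleton_iff.mp hf0 ▸ hfS)⟩, hfS⟩

lemma singleton_mem_extK (h𝒜 : 𝒜.Nonempty) {g : Gamble Ω} (hg : g ∈ Gpos Ω) :
    {g} ∈ ExtK 𝒜 :=
  ⟨1, one_pos, fun _ => h𝒜.some, fun _ => h𝒜.some_mem,
    fun _ _ _ => ⟨g, rfl, Gpos_subset_desext _ hg⟩⟩

lemma mem_extK_of_subset {A B : Set (Gamble Ω)} (hA : A ∈ ExtK 𝒜) (hAB : A ⊆ B) :
    B ∈ ExtK 𝒜 :=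
  mem_extK_of_mem_extK hA fun _ _ f hfA hfS => ⟨f, hAB hfA, hfS⟩

lemma image_mem_extK {A : Set (Gamble Ω)} (hA : A ∈ ExtK 𝒜) {F : Gamble Ω → Gamble Ω}
    (hF : ∀ g ∈ A, gle g (F g)) : F '' A ∈ ExtK 𝒜 :=
  mem_extK_of_mem_extK hA fun _ _ f hfA hfS =>
    ⟨F f, Set.mem_image_of_mem F hfA, mem_desext_of_gle hfS (hF f hfA)⟩

lemma posi_combination_mem_extK {n : ℕ} (hn : 0 < n) {A : Fin n → Set (Gamble Ω)}
    (hA : ∀ i, A i ∈ ExtK 𝒜) {F : (Fin n → Gamble Ω) → Gamble Ω}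
    (hF : ∀ g : Fin n → Gamble Ω, (∀ i, g i ∈ A i) → F g ∈ posi (Set.range g)) :
    {b | ∃ g : Fin n → Gamble Ω, (∀ i, g i ∈ A i) ∧ b = F g} ∈ ExtK 𝒜 := by
  choose m hm B hB hprop using hA
  have : Nonempty (Fin n) := Fin.pos_iff_nonempty.mp hn
  have : Nonempty (Σ i, Fin (m i)) :=
    ⟨⟨Classical.arbitrary _, (Fin.pos_iff_nonempty.mp (hm _)).some⟩⟩
  refine mem_extK_of_fintype (fun k : Σ i, Fin (m i) => B k.1 k.2) (fun k => hB _ _)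
    fun g hg h0 => ?_
  have hsub : ∀ i, desext (Set.range fun k => g ⟨i, k⟩) ⊆ desext (Set.range g) :=
    fun i => desext_mono (Set.range_subset_iff.mpr fun k => ⟨_, rfl⟩)
  have hwitness : ∀ i, ∃ f ∈ A i, f ∈ desext (Set.range g) := fun i => by
    obtain ⟨f, hfA, hfS⟩ := hprop i _ (fun k => hg ⟨i, k⟩) fun h0i => h0 (hsub i h0i)
    exact ⟨f, hfA, hsub i hfS⟩
  choose f hfA hfS using hwitness
  exact ⟨F f, ⟨f, hfA, rfl⟩, posi_subset_desext (Set.range_subset_iff.mpr hfS) (hF f hfA)⟩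

end ExtK

theorem stmt7_general {Ω : Type v} (𝒜 : Set (Set (Gamble Ω)))
    (h𝒜 : 𝒜.Nonempty) (h : (∅ : Set (Gamble Ω)) ∉ ExtK 𝒜) :
    CoherentK (ExtK 𝒜) :=
  ⟨h, fun _ hA => diff_zero_mem_extK hA, fun _ hg => singleton_mem_extK h𝒜 hg,
    fun _ hA _ hAB => mem_extK_of_subset hA hAB, fun _ hA _ hF => image_mem_extK hA hF,
    fun _ hn _ hA _ hF => posi_combination_mem_extK hn hA hF⟩

theorem stmt7 {Ω : Type v} [Nonempty Ω] (𝒜 : Set (Set (Gamble Ω)))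
    (h𝒜 : 𝒜.Nonempty) (h : (∅ : Set (Gamble Ω)) ∉ ExtK 𝒜) :
    CoherentK (ExtK 𝒜) :=
  stmt7_general 𝒜 h𝒜 h
end

section
/- Let D be a coherent set of desirable gambles and define 𝒦_D := {B ⊆ 𝒢 : B ∩ D ≠ ∅}. Then 𝒦_D is a coherent set of desirable gamble sets and moreover satisfies the infinite addition axiom KAddInf. -/
open scoped BigOperators

universe u v

section

variable {Ω : Type v} {D : Set (Gamble Ω)}

lemma posi_subset (hsmul : ∀ g ∈ D, ∀ l : ℝ, 0 < l → l • g ∈ D)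
    (hadd : ∀ f ∈ D, ∀ g ∈ D, f + g ∈ D) {B : Set (Gamble Ω)} (hB : B ⊆ D) :
    posi B ⊆ D := by
  rintro f ⟨n, hn, l, g, hl, hg, rfl⟩
  exact Finset.sum_induction_nonempty _ (· ∈ D) (fun a b ha hb => hadd a ha b hb)
    (Finset.univ_nonempty_iff.mpr ⟨⟨0, hn⟩⟩) fun i _ => hsmul _ (hB (hg i)) _ (hl i)

namespace CoherentD

lemma mem_of_gle (hD : CoherentD D) {f g : Gamble Ω} (hf : f ∈ D) (hfg : gle f g) : g ∈ D := by
  by_cases hgf : g = f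
  · rwa [hgf]
  have hdiff : g - f ∈ Gpos Ω :=
    ⟨fun ω => by simpa using hfg ω, sub_ne_zero.mpr hgf⟩
  simpa using hD.2.2.2 f hf _ (hD.2.1 hdiff)

-- Pick a desirable `g i ∈ A i` for every `i`; then `F g ∈ posi D ⊆ D`.
lemma selection_inter_nonempty (hD : CoherentD D) {I : Type*} {A : I → Set (Gamble Ω)}
    (hA : ∀ i, (A i ∩ D).Nonempty) (F : (I → Gamble Ω) → Gamble Ω)
    (hF : ∀ g : I → Gamble Ω, (∀ i, g i ∈ A i) → F g ∈ posi (Set.range g)) :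
    ({b | ∃ g : I → Gamble Ω, (∀ i, g i ∈ A i) ∧ b = F g} ∩ D).Nonempty := by
  choose g hgA hgD using hA
  refine ⟨F g, ⟨g, hgA, rfl⟩, posi_subset hD.2.2.1 hD.2.2.2 ?_ (hF g hgA)⟩
  rintro _ ⟨i, rfl⟩
  exact hgD i

lemma coherentK_inter_nonempty (hD : CoherentD D) :
    CoherentK {B : Set (Gamble Ω) | (B ∩ D).Nonempty} := by
  refine ⟨?_, ?_, ?_, ?_, ?_, fun n _ A hA F hF => hD.selection_inter_nonempty hA F hF⟩
  · rintro ⟨f, hf, -⟩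
    exact hf
  · rintro A ⟨f, hfA, hfD⟩
    exact ⟨f, ⟨hfA, fun hf0 => hD.1 (hf0 ▸ hfD)⟩, hfD⟩
  · exact fun g hg => ⟨g, rfl, hD.2.1 hg⟩
  · rintro A ⟨f, hfA, hfD⟩ B hAB
    exact ⟨f, hAB hfA, hfD⟩
  · rintro A ⟨f, hfA, hfD⟩ F hF
    exact ⟨F f, ⟨f, hfA, rfl⟩, hD.mem_of_gle hfD (hF f hfA)⟩

lemma kAddInf_inter_nonempty (hD : CoherentD D) :
    KAddInf {B : Set (Gamble Ω) | (B ∩ D).Nonempty} :=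
  fun _ _ hA F hF => hD.selection_inter_nonempty hA F hF

end CoherentD

end

theorem stmt13_general {Ω : Type v} (D : Set (Gamble Ω)) (hD : CoherentD D) :
    CoherentK {B : Set (Gamble Ω) | (B ∩ D).Nonempty} ∧
    KAddInf {B : Set (Gamble Ω) | (B ∩ D).Nonempty} :=
  ⟨hD.coherentK_inter_nonempty, hD.kAddInf_inter_nonempty⟩

theorem stmt13 {Ω : Type v} [Nonempty Ω] (D : Set (Gamble Ω)) (hD : CoherentD D) :
    CoherentK {B : Set (Gamble Ω) | (B ∩ D).Nonempty} ∧
    KAddInf {B : Set (Gamble Ω) | (B ∩ D).Nonempty} :=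
  stmt13_general D hD
end
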